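/- arXiv:2004.03005 — 4 statements merged into one kernel-verified Lean document; each statement's English description precedes it below -/
import Mathlib

section
/- Let J be an m×n real matrix, γ > 0, F ∈ ℝ^m, g = Jᵀ F, and s = -(Jᵀ J + γ I)⁻¹ g. Then |sᵀ (γ s + g)| ≤ ‖J‖² ‖g‖² / γ². -/
open scoped RealInnerProductSpace

/-!
Pairing the step equation `J†J s + γ s = -g` with `s` gives `⟪s, γ s + g⟫ = -‖J s‖²`. This is
nonpositive, so `γ ‖s‖² ≤ -⟪s, g⟫ ≤ ‖s‖ ‖g‖`, i.e. `‖s‖ ≤ ‖g‖ / γ`; hence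
`‖J s‖² ≤ ‖J‖² ‖s‖² ≤ ‖J‖² ‖g‖² / γ²`.
-/

open ContinuousLinearMap

section LMStep

variable {E G : Type*} [NormedAddCommGroup E] [InnerProductSpace ℝ E] [CompleteSpace E]
  [NormedAddCommGroup G] [InnerProductSpace ℝ G] [CompleteSpace G]
  {J : E →L[ℝ] G} {γ : ℝ} {g s : E}

theorem inner_smul_add_eq_neg_norm_sq_of_step (hs : adjoint J (J s) + γ • s = -g) :
    ⟪s, γ • s + g⟫ = -‖J s‖ ^ 2 := by
  have hstep : γ • s + g = -adjoint J (J s) := by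
    rw [eq_neg_iff_add_eq_zero, add_comm, ← add_assoc, hs, neg_add_cancel]
  rw [hstep, inner_neg_right, adjoint_inner_right, real_inner_self_eq_norm_sq]

theorem norm_le_div_of_step (hγ : 0 < γ) (hs : adjoint J (J s) + γ • s = -g) :
    ‖s‖ ≤ ‖g‖ / γ := by
  have hdescent : γ * ‖s‖ ^ 2 + ⟪s, g⟫ ≤ 0 := by
    have h := inner_smul_add_eq_neg_norm_sq_of_step hs
    rw [inner_add_right, real_inner_smul_right, real_inner_self_eq_norm_sq] at h
    rw [h, neg_nonpos]
    positivity
  have hcs : -(‖s‖ * ‖g‖) ≤ ⟪s, g⟫ := (abs_le.mp (abs_real_inner_le_norm s g)).1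
  rcases (norm_nonneg s).eq_or_lt with hzero | hpos
  · rw [← hzero]
    positivity
  · rw [le_div_iff₀ hγ]
    nlinarith

end LMStep

theorem lm_step_inner_bound_general {m n : ℕ} (γ : ℝ) (hγ : 0 < γ)
    (J : EuclideanSpace ℝ (Fin n) →L[ℝ] EuclideanSpace ℝ (Fin m))
    (g s : EuclideanSpace ℝ (Fin n))
    (hs : ContinuousLinearMap.adjoint J (J s) + γ • s = -g) :
    |⟪s, γ • s + g⟫| ≤ ‖J‖ ^ 2 * ‖g‖ ^ 2 / γ ^ 2 := by
  have hJs : ‖J s‖ ≤ ‖J‖ * (‖g‖ / γ) :=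
    (J.le_opNorm s).trans (mul_le_mul_of_nonneg_left (norm_le_div_of_step hγ hs) (norm_nonneg J))
  rw [inner_smul_add_eq_neg_norm_sq_of_step hs, abs_neg, abs_of_nonneg (by positivity)]
  calc ‖J s‖ ^ 2 ≤ (‖J‖ * (‖g‖ / γ)) ^ 2 := pow_le_pow_left₀ (norm_nonneg _) hJs 2
    _ = ‖J‖ ^ 2 * ‖g‖ ^ 2 / γ ^ 2 := by ring

/-- For the exact LM step, `|sᵀ(γs + g)| ≤ ‖J‖²‖g‖²/γ²`. -/
theorem lm_step_inner_bound {m n : ℕ} (γ : ℝ) (hγ : 0 < γ)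
    (J : EuclideanSpace ℝ (Fin n) →L[ℝ] EuclideanSpace ℝ (Fin m))
    (F : EuclideanSpace ℝ (Fin m)) (g s : EuclideanSpace ℝ (Fin n))
    (hg : g = ContinuousLinearMap.adjoint J F)
    (hs : ContinuousLinearMap.adjoint J (J s) + γ • s = -g) :
    |⟪s, γ • s + g⟫| ≤ ‖J‖ ^ 2 * ‖g‖ ^ 2 / γ ^ 2 :=
  lm_step_inner_bound_general γ hγ J g s hs
end

section
/- Let J be an m×n real matrix, γ > 0, F ∈ ℝ^m with g = Jᵀ F ≠ 0. Define the model m(s) = ½‖F + J s‖² + ½ γ ‖s‖² and the Cauchy step s_c = -(‖g‖² / (gᵀ (Jᵀ J + γ I) g)) g. Then m(0) - m(s_c) ≥ (1/2) ‖g‖² / (‖J‖² + γ). -/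
open scoped RealInnerProductSpace

/-! Along `-g` the model is the quadratic `t ↦ m(0) - t‖g‖² + ½ t² q` with curvature
`q = ‖J g‖² + γ‖g‖²`, so its minimiser, the Cauchy step, decreases the model by `½‖g‖⁴ / q`.
Since `‖J g‖ ≤ ‖J‖ ‖g‖`, the curvature is at most `(‖J‖² + γ) ‖g‖²`. -/

theorem div_mul_sub_half_mul_div_sq_mul (a q : ℝ) :
    a / q * a - 1 / 2 * (a / q) ^ 2 * q = 1 / 2 * a ^ 2 / q := by
  rcases eq_or_ne q 0 with rfl | hq
  · simp
  · field_simp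
    ring

theorem norm_apply_sq_add_le {E F : Type*} [SeminormedAddCommGroup E] [NormedSpace ℝ E]
    [SeminormedAddCommGroup F] [NormedSpace ℝ F] (J : E →L[ℝ] F) (γ : ℝ) (g : E) :
    ‖J g‖ ^ 2 + γ * ‖g‖ ^ 2 ≤ (‖J‖ ^ 2 + γ) * ‖g‖ ^ 2 := by
  have := pow_le_pow_left₀ (norm_nonneg _) (J.le_opNorm g) 2
  rw [mul_pow] at this
  linarith

section

variable {E F : Type*} [NormedAddCommGroup E] [InnerProductSpace ℝ E] [CompleteSpace E]
  [NormedAddCommGroup F] [InnerProductSpace ℝ F] [CompleteSpace F]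

noncomputable def lmModel (J : E →L[ℝ] F) (r : F) (γ : ℝ) (s : E) : ℝ :=
  1 / 2 * ‖r + J s‖ ^ 2 + 1 / 2 * γ * ‖s‖ ^ 2

theorem inner_adjoint_apply_add_smul_self (J : E →L[ℝ] F) (γ : ℝ) (g : E) :
    ⟪g, ContinuousLinearMap.adjoint J (J g) + γ • g⟫ = ‖J g‖ ^ 2 + γ * ‖g‖ ^ 2 := by
  rw [inner_add_right, real_inner_smul_right, ContinuousLinearMap.adjoint_inner_right,
    real_inner_self_eq_norm_sq, real_inner_self_eq_norm_sq]

theorem lmModel_zero_sub_smul_adjoint {J : E →L[ℝ] F} {r : F} {g : E}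
    (hg : g = ContinuousLinearMap.adjoint J r) (γ t : ℝ) :
    lmModel J r γ 0 - lmModel J r γ (-(t • g)) =
      t * ‖g‖ ^ 2 - 1 / 2 * t ^ 2 * (‖J g‖ ^ 2 + γ * ‖g‖ ^ 2) := by
  have hrJg : ⟪r, J g⟫ = ‖g‖ ^ 2 := by
    rw [← ContinuousLinearMap.adjoint_inner_left, ← hg, real_inner_self_eq_norm_sq]
  simp only [lmModel, map_zero, add_zero, norm_zero, map_neg, map_smul, ← sub_eq_add_neg,
    norm_sub_sq_real, real_inner_smul_right, hrJg, norm_neg, norm_smul, mul_pow,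
    Real.norm_eq_abs, sq_abs]
  ring

theorem lmModel_cauchy_step_decrease {J : E →L[ℝ] F} {r : F} {g : E}
    (hg : g = ContinuousLinearMap.adjoint J r) (γ : ℝ) :
    lmModel J r γ 0 - lmModel J r γ (-((‖g‖ ^ 2 / (‖J g‖ ^ 2 + γ * ‖g‖ ^ 2)) • g)) =
      1 / 2 * ‖g‖ ^ 4 / (‖J g‖ ^ 2 + γ * ‖g‖ ^ 2) := by
  rw [lmModel_zero_sub_smul_adjoint hg, div_mul_sub_half_mul_div_sq_mul]
  ring

theorem half_norm_sq_div_le_lmModel_cauchy_step_decrease {J : E →L[ℝ] F} {r : F} {g : E}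
    (hg : g = ContinuousLinearMap.adjoint J r) {γ : ℝ} (hγ : 0 < γ) :
    1 / 2 * ‖g‖ ^ 2 / (‖J‖ ^ 2 + γ) ≤
      lmModel J r γ 0 - lmModel J r γ (-((‖g‖ ^ 2 / (‖J g‖ ^ 2 + γ * ‖g‖ ^ 2)) • g)) := by
  rw [lmModel_cauchy_step_decrease hg]
  rcases eq_or_ne g 0 with rfl | hg0
  · simp
  calc 1 / 2 * ‖g‖ ^ 2 / (‖J‖ ^ 2 + γ) = 1 / 2 * ‖g‖ ^ 4 / ((‖J‖ ^ 2 + γ) * ‖g‖ ^ 2) := by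
        field_simp
    _ ≤ 1 / 2 * ‖g‖ ^ 4 / (‖J g‖ ^ 2 + γ * ‖g‖ ^ 2) :=
        div_le_div_of_nonneg_left (by positivity) (by positivity) (norm_apply_sq_add_le J γ g)

end

theorem lm_cauchy_decrease_general {m n : ℕ} (γ : ℝ) (hγ : 0 < γ)
    (J : EuclideanSpace ℝ (Fin n) →L[ℝ] EuclideanSpace ℝ (Fin m))
    (F : EuclideanSpace ℝ (Fin m)) (g : EuclideanSpace ℝ (Fin n))
    (hg : g = ContinuousLinearMap.adjoint J F)
    (mdl : EuclideanSpace ℝ (Fin n) → ℝ)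
    (hmdl : ∀ s, mdl s = 1 / 2 * ‖F + J s‖ ^ 2 + 1 / 2 * γ * ‖s‖ ^ 2)
    (sc : EuclideanSpace ℝ (Fin n))
    (hsc : sc = -((‖g‖ ^ 2 / ⟪g, ContinuousLinearMap.adjoint J (J g) + γ • g⟫) • g)) :
    mdl 0 - mdl sc ≥ 1 / 2 * ‖g‖ ^ 2 / (‖J‖ ^ 2 + γ) := by
  obtain rfl : mdl = lmModel J F γ := funext hmdl
  rw [hsc, inner_adjoint_apply_add_smul_self]
  exact half_norm_sq_div_le_lmModel_cauchy_step_decrease hg hγ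

/-- The Cauchy step achieves the fraction-of-Cauchy-decrease bound
`m(0) - m(s_c) ≥ ½‖g‖²/(‖J‖² + γ)`. -/
theorem lm_cauchy_decrease {m n : ℕ} (γ : ℝ) (hγ : 0 < γ)
    (J : EuclideanSpace ℝ (Fin n) →L[ℝ] EuclideanSpace ℝ (Fin m))
    (F : EuclideanSpace ℝ (Fin m)) (g : EuclideanSpace ℝ (Fin n))
    (hg : g = ContinuousLinearMap.adjoint J F) (hg0 : g ≠ 0)
    (mdl : EuclideanSpace ℝ (Fin n) → ℝ)
    (hmdl : ∀ s, mdl s = 1 / 2 * ‖F + J s‖ ^ 2 + 1 / 2 * γ * ‖s‖ ^ 2)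
    (sc : EuclideanSpace ℝ (Fin n))
    (hsc : sc = -((‖g‖ ^ 2 / ⟪g, ContinuousLinearMap.adjoint J (J g) + γ • g⟫) • g)) :
    mdl 0 - mdl sc ≥ 1 / 2 * ‖g‖ ^ 2 / (‖J‖ ^ 2 + γ) :=
  lm_cauchy_decrease_general γ hγ J F g hg mdl hmdl sc hsc
end

section
/- Define F : ℝ³ → ℝ³ by F(x) = (exp(x₁ - x₂) - 1, x₃ - 1, x₃ + 1), and let X* = {x ∈ ℝ³ : x₁ = x₂ and x₃ = 0}. Then for all x with |x₁ - x₂| ≤ 1/2, ‖F(x) - F(x̄)‖ ≥ dist(x, X*), where x̄ is any point of X* and dist(x, X*) = √((x₁ - x₂)²/2 + x₃²). -/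
/-!
On `X*` the map is constant, `F x̄ = (0, -1, 1)`, so `‖F x - F x̄‖² = (e^{x₁-x₂} - 1)² + 2 x₃²`.
Against `dist(x, X*)² = (x₁-x₂)²/2 + x₃²` (the plane's nearest point to `x` is
`((x₁+x₂)/2, (x₁+x₂)/2, 0)`) only the first coordinate needs work: `2 (e^t - 1)² ≥ t²` for
`|t| ≤ 1/2`, which for `t < 0` comes from `e^{-s} ≤ 1 - 3s/4` on `[0, 1/2]`, as `(3/4)² ≥ 1/2`.
-/

open Real Metric

theorem Real.exp_neg_le_one_sub {s : ℝ} (hs₀ : 0 ≤ s) (hs : s ≤ 1 / 2) :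
    exp (-s) ≤ 1 - 3 / 4 * s := by
  have hquad := quadratic_le_exp_of_nonneg hs₀
  have hinv : exp (-s) * exp s = 1 := by rw [← exp_add, neg_add_cancel, exp_zero]
  nlinarith [exp_pos (-s)]

theorem Real.sq_le_two_mul_sq_exp_sub_one {t : ℝ} (ht : |t| ≤ 1 / 2) :
    t ^ 2 ≤ 2 * (exp t - 1) ^ 2 := by
  rcases le_total 0 t with ht₀ | ht₀
  · nlinarith [add_one_le_exp t]
  · have h := exp_neg_le_one_sub (neg_nonneg.2 ht₀) (by linarith [neg_abs_le t])
    rw [neg_neg] at h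
    nlinarith

def diagPlane : Set (EuclideanSpace ℝ (Fin 3)) := {x | x 0 = x 1 ∧ x 2 = 0}

theorem dist_of_mem_diagPlane (x : EuclideanSpace ℝ (Fin 3)) {y : EuclideanSpace ℝ (Fin 3)}
    (hy : y ∈ diagPlane) :
    dist x y = √((x 0 - x 1) ^ 2 / 2 + x 2 ^ 2 + 2 * ((x 0 + x 1) / 2 - y 0) ^ 2) := by
  obtain ⟨hy01, hy2⟩ := hy
  rw [EuclideanSpace.dist_eq, Fin.sum_univ_three]
  simp only [Real.dist_eq, sq_abs, ← hy01, hy2]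
  ring_nf

theorem infDist_diagPlane (x : EuclideanSpace ℝ (Fin 3)) :
    infDist x diagPlane = √((x 0 - x 1) ^ 2 / 2 + x 2 ^ 2) := by
  set m := (x 0 + x 1) / 2
  have hm : !₂[m, m, 0] ∈ diagPlane := ⟨rfl, rfl⟩
  refine le_antisymm ?_ ((le_infDist ⟨_, hm⟩).2 fun y hy => ?_)
  · refine (infDist_le_dist_of_mem hm).trans_eq ?_
    rw [dist_of_mem_diagPlane x hm]
    simp [m]
  · rw [dist_of_mem_diagPlane x hy]
    exact sqrt_le_sqrt (le_add_of_nonneg_right (by positivity))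

/-- Example 2 of the paper: for `F(x) = (e^{x₁-x₂} - 1, x₃ - 1, x₃ + 1)` and
`X* = {x : x₁ = x₂, x₃ = 0}`, when `|x₁ - x₂| ≤ 1/2` one has
`‖F(x) - F(x̄)‖ ≥ dist(x, X*) = √((x₁-x₂)²/2 + x₃²)` for every `x̄ ∈ X*`. -/
theorem lm_example2_error_bound
    (F : EuclideanSpace ℝ (Fin 3) → EuclideanSpace ℝ (Fin 3))
    (hF : ∀ x : EuclideanSpace ℝ (Fin 3),
      F x = ![Real.exp (x 0 - x 1) - 1, x 2 - 1, x 2 + 1])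
    (Xstar : Set (EuclideanSpace ℝ (Fin 3)))
    (hX : Xstar = {x : EuclideanSpace ℝ (Fin 3) | x 0 = x 1 ∧ x 2 = 0}) :
    ∀ x : EuclideanSpace ℝ (Fin 3), |x 0 - x 1| ≤ 1 / 2 →
      (Metric.infDist x Xstar = Real.sqrt ((x 0 - x 1) ^ 2 / 2 + (x 2) ^ 2)) ∧
      ∀ xbar ∈ Xstar,
        ‖F x - F xbar‖ ≥ Real.sqrt ((x 0 - x 1) ^ 2 / 2 + (x 2) ^ 2) := by
  subst hX
  intro x hx
  refine ⟨infDist_diagPlane x, fun xbar ⟨hxbar01, hxbar2⟩ => ?_⟩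
  have hnorm : ‖F x - F xbar‖ ^ 2 = (exp (x 0 - x 1) - 1) ^ 2 + 2 * x 2 ^ 2 := by
    rw [EuclideanSpace.real_norm_sq_eq, Fin.sum_univ_three]
    simp only [PiLp.sub_apply, hF, Matrix.cons_val_zero, Matrix.cons_val_one, Matrix.cons_val,
      hxbar01, hxbar2, sub_self, exp_zero, zero_sub, sub_zero, sub_neg_eq_add, sub_add_cancel]
    ring
  rw [ge_iff_le, sqrt_le_left (norm_nonneg _), hnorm]
  linarith [sq_le_two_mul_sq_exp_sub_one hx, sq_nonneg (x 2)]
end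

section
/- Let C₃ > 0, Ĉ₃ > 0, c > 0, δ > 0 with C₃² δ² < 1, and suppose f̄ satisfies 0 < f̄ < min{1/c, (1 - C₃²δ²)/(Ĉ₃² + c)}. Let d, d' ≥ 0 with d ≤ δ satisfy (1 - c f̄) d'² ≤ C₃² d⁴ + Ĉ₃² f̄ d². Then d' ≤ C₄ d with C₄ = √((C₃² δ² + Ĉ₃² f̄)/(1 - c f̄)) and C₄ ∈ (0, 1). -/
/-!
On `d ≤ δ` the quartic term of the recursion is dominated by `C₃² δ² d²`, so the recursion
becomes `d'² ≤ C₄² d²`. The condition on `f̄` is exactly `C₃² δ² + Ĉ₃² f̄ < 1 - c f̄`,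
i.e. `C₄² < 1`.
-/

theorem le_sqrt_mul_of_sq_le_mul_sq {r d d' : ℝ} (hd : 0 ≤ d) (h : d' ^ 2 ≤ r * d ^ 2) :
    d' ≤ √r * d :=
  calc d' ≤ |d'| := le_abs_self d'
    _ ≤ √(r * d ^ 2) := Real.abs_le_sqrt h
    _ = √r * d := by rw [Real.sqrt_mul' r (sq_nonneg d), Real.sqrt_sq hd]

theorem sq_le_div_mul_sq_of_quartic_bound {C b κ δ d d' : ℝ} (hκ : 0 < κ) (hd : 0 ≤ d)
    (hdδ : d ≤ δ) (h : κ * d' ^ 2 ≤ C ^ 2 * d ^ 4 + b * d ^ 2) :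
    d' ^ 2 ≤ (C ^ 2 * δ ^ 2 + b) / κ * d ^ 2 := by
  have hquartic : C ^ 2 * d ^ 4 ≤ C ^ 2 * δ ^ 2 * d ^ 2 := by
    have : d ^ 2 ≤ δ ^ 2 := pow_le_pow_left₀ hd hdδ 2
    calc C ^ 2 * d ^ 4 = C ^ 2 * d ^ 2 * d ^ 2 := by ring
      _ ≤ C ^ 2 * δ ^ 2 * d ^ 2 := by gcongr
  rw [div_mul_eq_mul_div, le_div_iff₀ hκ]
  linarith

theorem div_one_sub_lt_one_of_lt_div {A B c f : ℝ} (hBc : 0 < B + c) (hκ : 0 < 1 - c * f)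
    (hf : f < (1 - A) / (B + c)) :
    (A + B * f) / (1 - c * f) < 1 := by
  rw [div_lt_one hκ]
  have := (lt_div_iff₀ hBc).mp hf
  linarith

theorem lm_linear_rate_general (C3 C3hat c delta fbar d d' : ℝ)
    (hC3hat : 0 < C3hat) (hc : 0 < c)
    (hfbar : 0 < fbar)
    (hfbarlt : fbar < min (1 / c) ((1 - C3 ^ 2 * delta ^ 2) / (C3hat ^ 2 + c)))
    (hd : 0 ≤ d) (hdle : d ≤ delta)
    (hrec : (1 - c * fbar) * d' ^ 2 ≤ C3 ^ 2 * d ^ 4 + C3hat ^ 2 * fbar * d ^ 2) :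
    d' ≤ Real.sqrt ((C3 ^ 2 * delta ^ 2 + C3hat ^ 2 * fbar) / (1 - c * fbar)) * d ∧
      Real.sqrt ((C3 ^ 2 * delta ^ 2 + C3hat ^ 2 * fbar) / (1 - c * fbar))
        ∈ Set.Ioo (0 : ℝ) 1 := by
  obtain ⟨hf_inv, hf_rate⟩ := lt_min_iff.mp hfbarlt
  have hκ : 0 < 1 - c * fbar := by
    have := (lt_div_iff₀' hc).mp hf_inv
    linarith
  have hr_pos : 0 < (C3 ^ 2 * delta ^ 2 + C3hat ^ 2 * fbar) / (1 - c * fbar) := by positivity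
  have hr_lt : (C3 ^ 2 * delta ^ 2 + C3hat ^ 2 * fbar) / (1 - c * fbar) < 1 :=
    div_one_sub_lt_one_of_lt_div (by positivity) hκ hf_rate
  refine ⟨le_sqrt_mul_of_sq_le_mul_sq hd (sq_le_div_mul_sq_of_quartic_bound hκ hd hdle hrec),
    Real.sqrt_pos.mpr hr_pos, (Real.sqrt_lt' one_pos).mpr (by rwa [one_pow])⟩

/-- Linear local convergence recursion for small nonzero residuals (Lemma 4.6). -/
theorem lm_linear_rate (C3 C3hat c delta fbar d d' : ℝ)
    (hC3 : 0 < C3) (hC3hat : 0 < C3hat) (hc : 0 < c) (hdelta : 0 < delta)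
    (hsmall : C3 ^ 2 * delta ^ 2 < 1)
    (hfbar : 0 < fbar)
    (hfbarlt : fbar < min (1 / c) ((1 - C3 ^ 2 * delta ^ 2) / (C3hat ^ 2 + c)))
    (hd : 0 ≤ d) (hd' : 0 ≤ d') (hdle : d ≤ delta)
    (hrec : (1 - c * fbar) * d' ^ 2 ≤ C3 ^ 2 * d ^ 4 + C3hat ^ 2 * fbar * d ^ 2) :
    d' ≤ Real.sqrt ((C3 ^ 2 * delta ^ 2 + C3hat ^ 2 * fbar) / (1 - c * fbar)) * d ∧
      Real.sqrt ((C3 ^ 2 * delta ^ 2 + C3hat ^ 2 * fbar) / (1 - c * fbar))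
        ∈ Set.Ioo (0 : ℝ) 1 :=
  lm_linear_rate_general C3 C3hat c delta fbar d d' hC3hat hc hfbar hfbarlt hd hdle hrec
end
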